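/- Lower bound on the smoothed class probability at a perturbed input (case ψ < ψ̃): Let x, x̃ ∈ X, let z★ be a longest common subsequence of x and x̃ with L := |z★|, let ψ, ψ̃ ∈ (0,1) with ψ < ψ̃, let f̄ : X → Y be any base classifier and y ∈ Y. Set μ := p_y(x; f̄, ψ) and W := μ − 1 + ψ^{|x|−L}, and let H★ := max{ h ∈ {0,…,L} : Σ_{i=h}^{L} B(L, ψ, i) ≥ W } (this set is nonempty since Σ_{i=0}^{L} B(L, ψ, i) = 1 ≥ W). Then p_y(x̃; f̄, ψ̃) ≥ (ψ̃^{|x̃|−L} / ψ^{|x|−L}) · ( Σ_{i=H★+1}^{L} B(L, ψ̃, i) + B(L, ψ̃, H★) · ⌊ (W − Σ_{j=H★+1}^{L} B(L, ψ, j)) / B(L, ψ, H★) ⌋_{C(L,H★)^{−1}} ). -/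

import Mathlib

/-- Apply a deletion indicator: keep the tokens at positions `i` with `ε i = true`, in order. -/
def applyDel {Ω : Type*} (x : List Ω) (ε : Fin x.length → Bool) : List Ω :=
  (List.finRange x.length).filterMap fun i => if ε i then some (x.get i) else none

/-- Number of retained tokens `|ε|`. -/
def retained {n : ℕ} (ε : Fin n → Bool) : ℕ :=
  (Finset.univ.filter fun i => ε i = true).card

/-- `q_ψ(ε|x) = ψ^{|x|-|ε|} (1-ψ)^{|ε|}`. -/
noncomputable def qdel {Ω : Type*} (ψ : ℝ) (x : List Ω) (ε : Fin x.length → Bool) : ℝ :=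
  ψ ^ (x.length - retained ε) * (1 - ψ) ^ (retained ε)

/-- The score `s_{f̄,ψ}(ε, x) = q_ψ(ε|x)·1[f̄(apply(x,ε)) = y]`. -/
noncomputable def score {Ω Y : Type*} [DecidableEq Y] (f : List Ω → Y) (y : Y) (ψ : ℝ)
    (x : List Ω) (ε : Fin x.length → Bool) : ℝ :=
  qdel ψ x ε * (if f (applyDel x ε) = y then 1 else 0)

/-- The smoothed class probability `p_y(x; f̄, ψ) = Σ_{ε ∈ E(x)} s_{f̄,ψ}(ε, x)`. -/
noncomputable def smoothedProb {Ω Y : Type*} [DecidableEq Y] (f : List Ω → Y) (y : Y)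
    (ψ : ℝ) (x : List Ω) : ℝ :=
  ∑ ε : Fin x.length → Bool, score f y ψ x ε

/-- `z` is a longest common subsequence of `x` and `x̃`. -/
def IsLCS {Ω : Type*} (z x xt : List Ω) : Prop :=
  z.Sublist x ∧ z.Sublist xt ∧ ∀ w : List Ω, w.Sublist x → w.Sublist xt → w.length ≤ z.length

/-- The binomial pmf `B(n, p, k) = C(n,k)·(1−p)^k·p^{n−k}`. -/
noncomputable def binomPMF (n : ℕ) (p : ℝ) (k : ℕ) : ℝ :=
  (n.choose k : ℝ) * (1 - p) ^ k * p ^ (n - k)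

/-- Gridded floor `⌊a⌋_v = v·⌊a/v⌋`. -/
noncomputable def gfloor (a v : ℝ) : ℝ := v * (⌊a / v⌋ : ℤ)

/-- Gridded ceiling `⌈a⌉_v = v·⌈a/v⌉`. -/
noncomputable def gceil (a v : ℝ) : ℝ := v * (⌈a / v⌉ : ℤ)

/-!
Every deletion indicator of the common subsequence `z★` lifts to `x` (and to `x̃`) by also
deleting all tokens outside `z★`. Comparing `x` with `z★` this way gives
`W ≤ ψ^{|x|-L} p_y(z★; ψ)` and `ψ̃^{|x̃|-L} p_y(z★; ψ̃) ≤ p_y(x̃; ψ̃)`.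

On `z★` the likelihood ratio `q_ψ̃(ε|z★) / q_ψ(ε|z★)` depends only on `|ε|` and decreases in it,
so by the Neyman–Pearson lemma, with `r` the ratio at `|ε| = H`,
`p_y(z★; ψ̃) ≥ Φ(p_y(z★; ψ))` for the affine map
`Φ(w) = Σ_{i>H} B(L, ψ̃, i) + r (w - Σ_{i>H} B(L, ψ, i))`. Since `Φ(0) ≤ 0` and
`ψ^{|x|-L} ≤ 1`, `Φ(W) ≤ ψ^{|x|-L} Φ(p_y(z★; ψ))`; the gridded floor only lowers the bound,
and `r · B(L, ψ, H) = B(L, ψ̃, H)`.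
-/

open Finset

section Deletion

variable {Ω : Type*}

lemma retained_le {n : ℕ} (ε : Fin n → Bool) : retained ε ≤ n :=
  (card_filter_le _ _).trans_eq (card_fin n)

lemma retained_cons {n : ℕ} (b : Bool) (ε : Fin n → Bool) :
    retained (Fin.cons b ε : Fin (n + 1) → Bool) = (if b then 1 else 0) + retained ε := by
  simp only [retained, card_filter, Fin.sum_univ_succ, Fin.cons_zero, Fin.cons_succ]

lemma applyDel_cons (a : Ω) (l : List Ω) (b : Bool) (ε : Fin l.length → Bool) :
    applyDel (a :: l) (Fin.cons b ε) = (if b then [a] else []) ++ applyDel l ε := by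
  cases b <;> simp [applyDel, List.finRange_succ, List.filterMap_map]

lemma List.Sublist.exists_lift_deletion {z x : List Ω} (h : z.Sublist x) :
    ∃ E : (Fin z.length → Bool) → (Fin x.length → Bool), Function.Injective E ∧
      ∀ σ, retained (E σ) = retained σ ∧ applyDel x (E σ) = applyDel z σ := by
  induction h with
  | slnil => exact ⟨id, Function.injective_id, fun _ => ⟨rfl, rfl⟩⟩
  | cons a _ ih =>
    obtain ⟨E, hinj, hE⟩ := ih
    refine ⟨fun σ => Fin.cons false (E σ), fun σ τ h => hinj (Fin.cons_right_injective _ h),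
      fun σ => ?_⟩
    simp [retained_cons, applyDel_cons, hE]
  | cons_cons a _ ih =>
    obtain ⟨E, hinj, hE⟩ := ih
    refine ⟨fun σ => Fin.cons (σ 0) (E (Fin.tail σ)), fun σ τ h => ?_, fun σ => ?_⟩
    · obtain ⟨h0, ht⟩ := Fin.cons_injective2 h
      rw [← Fin.cons_self_tail σ, ← Fin.cons_self_tail τ, h0, hinj ht]
    · induction σ using Fin.consCases with
      | cons b τ => simp [retained_cons, applyDel_cons, hE]

lemma sum_retained {M : Type*} [AddCommMonoid M] (n : ℕ) (g : ℕ → M) :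
    ∑ σ : Fin n → Bool, g (retained σ) = ∑ k ∈ range (n + 1), n.choose k • g k := by
  have h := sum_powerset_apply_card g (x := (univ : Finset (Fin n)))
  rw [card_univ, Fintype.card_fin, powerset_univ] at h
  rw [← h]
  exact Fintype.sum_equiv
    { toFun := fun σ => univ.filter fun i => σ i = true
      invFun := fun s i => decide (i ∈ s)
      left_inv := fun σ => by ext i; simp
      right_inv := fun s => by ext i; simp } _ _ fun σ => rfl

lemma sum_qdel (ψ : ℝ) (x : List Ω) : ∑ ε, qdel ψ x ε = 1 := by
  simp only [qdel]
  rw [sum_retained x.length fun k => ψ ^ (x.length - k) * (1 - ψ) ^ k]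
  simpa [nsmul_eq_mul, mul_comm, mul_left_comm] using (add_pow (1 - ψ) ψ x.length).symm

variable {Y : Type*} [DecidableEq Y] (f : List Ω → Y) (y : Y) {ψ : ℝ}

lemma qdel_nonneg (hψ0 : 0 ≤ ψ) (hψ1 : ψ ≤ 1) (x : List Ω) (ε : Fin x.length → Bool) :
    0 ≤ qdel ψ x ε := by
  unfold qdel
  have : 0 ≤ 1 - ψ := by linarith
  positivity

lemma score_nonneg (hψ0 : 0 ≤ ψ) (hψ1 : ψ ≤ 1) (x : List Ω) (ε : Fin x.length → Bool) :
    0 ≤ score f y ψ x ε :=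
  mul_nonneg (qdel_nonneg hψ0 hψ1 x ε) (by split_ifs <;> norm_num)

lemma score_le_qdel (hψ0 : 0 ≤ ψ) (hψ1 : ψ ≤ 1) (x : List Ω) (ε : Fin x.length → Bool) :
    score f y ψ x ε ≤ qdel ψ x ε := by
  unfold score
  split_ifs
  · rw [mul_one]
  · rw [mul_zero]; exact qdel_nonneg hψ0 hψ1 x ε

lemma List.Sublist.exists_sum_qdel_sum_score {z x : List Ω} (h : z.Sublist x) :
    ∃ I : Finset (Fin x.length → Bool),
      ∑ ε ∈ I, qdel ψ x ε = ψ ^ (x.length - z.length) ∧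
      ∑ ε ∈ I, score f y ψ x ε = ψ ^ (x.length - z.length) * smoothedProb f y ψ z := by
  obtain ⟨E, hinj, hE⟩ := h.exists_lift_deletion
  have hq : ∀ σ, qdel ψ x (E σ) = ψ ^ (x.length - z.length) * qdel ψ z σ := fun σ => by
    have : x.length - retained σ = (x.length - z.length) + (z.length - retained σ) := by
      have := retained_le σ; have := h.length_le; omega
    rw [qdel, qdel, (hE σ).1, this, pow_add, mul_assoc]
  refine ⟨univ.image E, ?_, ?_⟩
  · rw [sum_image hinj.injOn, sum_congr rfl fun σ _ => hq σ, ← mul_sum, sum_qdel, mul_one]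
  · rw [sum_image hinj.injOn, smoothedProb, mul_sum]
    exact sum_congr rfl fun σ _ => by rw [score, score, hq, (hE σ).2, mul_assoc]

lemma pow_mul_smoothedProb_le_of_sublist (hψ0 : 0 ≤ ψ) (hψ1 : ψ ≤ 1) {z x : List Ω}
    (h : z.Sublist x) :
    ψ ^ (x.length - z.length) * smoothedProb f y ψ z ≤ smoothedProb f y ψ x := by
  obtain ⟨I, -, hI⟩ := h.exists_sum_qdel_sum_score f y (ψ := ψ)
  rw [← hI]
  exact sum_le_univ_sum_of_nonneg fun ε => score_nonneg f y hψ0 hψ1 x ε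

lemma smoothedProb_le_of_sublist (hψ0 : 0 ≤ ψ) (hψ1 : ψ ≤ 1) {z x : List Ω}
    (h : z.Sublist x) :
    smoothedProb f y ψ x ≤
      ψ ^ (x.length - z.length) * smoothedProb f y ψ z + (1 - ψ ^ (x.length - z.length)) := by
  obtain ⟨I, hIq, hIs⟩ := h.exists_sum_qdel_sum_score f y (ψ := ψ)
  have hcompl : ∑ ε ∈ Iᶜ, score f y ψ x ε ≤ ∑ ε ∈ Iᶜ, qdel ψ x ε :=
    sum_le_sum fun ε _ => score_le_qdel f y hψ0 hψ1 x ε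
  have htotal := sum_add_sum_compl I fun ε => qdel ψ x ε
  rw [sum_qdel] at htotal
  rw [smoothedProb, ← sum_add_sum_compl I]
  linarith

end Deletion

/-- Finite Neyman–Pearson lemma: among `[0,1]`-valued tests `t`, `∑ t c` is smallest for the
indicator of `S`. -/
lemma sum_le_sum_mul_of_nonpos_of_nonneg {ι : Type*} [Fintype ι] (S : Finset ι) {c t : ι → ℝ}
    (hS : ∀ i ∈ S, c i ≤ 0) (hSc : ∀ i ∉ S, 0 ≤ c i) (ht0 : ∀ i, 0 ≤ t i) (ht1 : ∀ i, t i ≤ 1) :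
    ∑ i ∈ S, c i ≤ ∑ i, t i * c i := by
  classical
  rw [← univ_inter S, ← sum_ite_mem]
  refine sum_le_sum fun i _ => ?_
  split_ifs with hi
  · nlinarith [hS i hi, ht1 i]
  · exact mul_nonneg (ht0 i) (hSc i hi)

lemma binomPMF_pos {n k : ℕ} {ψ : ℝ} (hψ0 : 0 < ψ) (hψ1 : ψ < 1) (hk : k ≤ n) :
    0 < binomPMF n ψ k := by
  have : (0 : ℝ) < n.choose k := mod_cast n.choose_pos hk
  have : 0 < 1 - ψ := by linarith
  unfold binomPMF
  positivity

/-- `likelihoodRatio ψ ψt n k` is the ratio `q_ψt(ε|x) / q_ψ(ε|x)` when `|x| = n` and `|ε| = k`. -/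
noncomputable def likelihoodRatio (ψ ψt : ℝ) (n k : ℕ) : ℝ :=
  (ψt / ψ) ^ (n - k) * ((1 - ψt) / (1 - ψ)) ^ k

section LikelihoodRatio

variable {ψ ψt : ℝ}

lemma likelihoodRatio_nonneg (hψ0 : 0 ≤ ψ) (hψ1 : ψ ≤ 1) (hψt0 : 0 ≤ ψt) (hψt1 : ψt ≤ 1)
    (n k : ℕ) : 0 ≤ likelihoodRatio ψ ψt n k := by
  have : 0 ≤ 1 - ψ := by linarith
  have : 0 ≤ 1 - ψt := by linarith
  unfold likelihoodRatio
  positivity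

lemma likelihoodRatio_antitone (hψ0 : 0 < ψ) (hψ1 : ψ < 1) (hle : ψ ≤ ψt) (hψt1 : ψt ≤ 1)
    (n : ℕ) : Antitone (likelihoodRatio ψ ψt n) := fun u v huv => by
  have h1ψ : 0 < 1 - ψ := by linarith
  have hbase : 0 ≤ (1 - ψt) / (1 - ψ) := div_nonneg (by linarith) h1ψ.le
  exact mul_le_mul (pow_le_pow_right₀ ((one_le_div hψ0).mpr hle) (by omega))
    (pow_le_pow_of_le_one hbase ((div_le_one h1ψ).mpr (by linarith)) huv)
    (pow_nonneg hbase v) (pow_nonneg (div_nonneg (by linarith) hψ0.le) _)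

lemma pow_mul_pow_eq_likelihoodRatio_mul (hψ0 : ψ ≠ 0) (hψ1 : ψ ≠ 1) (n k : ℕ) :
    ψt ^ (n - k) * (1 - ψt) ^ k = likelihoodRatio ψ ψt n k * (ψ ^ (n - k) * (1 - ψ) ^ k) := by
  have : 1 - ψ ≠ 0 := sub_ne_zero.mpr hψ1.symm
  rw [likelihoodRatio, div_pow, div_pow]
  field_simp

lemma qdel_eq_likelihoodRatio_mul {Ω : Type*} (hψ0 : ψ ≠ 0) (hψ1 : ψ ≠ 1) (x : List Ω)
    (ε : Fin x.length → Bool) :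
    qdel ψt x ε = likelihoodRatio ψ ψt x.length (retained ε) * qdel ψ x ε :=
  pow_mul_pow_eq_likelihoodRatio_mul hψ0 hψ1 _ _

lemma binomPMF_eq_likelihoodRatio_mul (hψ0 : ψ ≠ 0) (hψ1 : ψ ≠ 1) (n k : ℕ) :
    binomPMF n ψt k = likelihoodRatio ψ ψt n k * binomPMF n ψ k := by
  rw [binomPMF, binomPMF, mul_assoc, mul_comm ((1 - ψt) ^ k),
    pow_mul_pow_eq_likelihoodRatio_mul hψ0 hψ1]
  ring

lemma sum_binomPMF_Icc_le (hψ0 : 0 < ψ) (hψ1 : ψ < 1) (hle : ψ ≤ ψt) (hψt1 : ψt ≤ 1)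
    (n H : ℕ) :
    ∑ k ∈ Icc (H + 1) n, binomPMF n ψt k ≤
      likelihoodRatio ψ ψt n H * ∑ k ∈ Icc (H + 1) n, binomPMF n ψ k := by
  rw [mul_sum]
  refine sum_le_sum fun k hk => ?_
  rw [mem_Icc] at hk
  rw [binomPMF_eq_likelihoodRatio_mul hψ0.ne' hψ1.ne]
  exact mul_le_mul_of_nonneg_right (likelihoodRatio_antitone hψ0 hψ1 hle hψt1 n (by omega))
    (binomPMF_pos hψ0 hψ1 hk.2).le

end LikelihoodRatio

theorem neymanPearson_le_smoothedProb {Ω Y : Type*} [DecidableEq Y] (f : List Ω → Y) (y : Y)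
    {ψ ψt : ℝ} (hψ0 : 0 < ψ) (hψ1 : ψ < 1) (hle : ψ ≤ ψt) (hψt1 : ψt ≤ 1) (z : List Ω)
    (H : ℕ) :
    ∑ k ∈ Icc (H + 1) z.length, binomPMF z.length ψt k +
        likelihoodRatio ψ ψt z.length H *
          (smoothedProb f y ψ z - ∑ k ∈ Icc (H + 1) z.length, binomPMF z.length ψ k) ≤
      smoothedProb f y ψt z := by
  set n := z.length
  set r := likelihoodRatio ψ ψt n H
  let c : (Fin n → Bool) → ℝ := fun σ => qdel ψt z σ - r * qdel ψ z σ
  have hc : ∀ σ, c σ = (likelihoodRatio ψ ψt n (retained σ) - r) * qdel ψ z σ := fun σ => by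
    rw [sub_mul, ← qdel_eq_likelihoodRatio_mul hψ0.ne' hψ1.ne]
  have hanti := likelihoodRatio_antitone hψ0 hψ1 hle hψt1 n
  have hq := qdel_nonneg hψ0.le hψ1.le z
  have htail : ∑ σ ∈ univ.filter (fun σ => H < retained σ), c σ =
      ∑ k ∈ Icc (H + 1) n, binomPMF n ψt k - r * ∑ k ∈ Icc (H + 1) n, binomPMF n ψ k := by
    have hIcc : Icc (H + 1) n = (range (n + 1)).filter (H < ·) := by
      ext k; simp only [mem_Icc, mem_filter, mem_range]; omega
    rw [sum_filter, mul_sum, ← sum_sub_distrib, hIcc, sum_filter]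
    refine (sum_retained n fun k => if H < k then
      ψt ^ (n - k) * (1 - ψt) ^ k - r * (ψ ^ (n - k) * (1 - ψ) ^ k) else 0).trans
      (sum_congr rfl fun k _ => ?_)
    split_ifs <;> simp only [binomPMF, nsmul_eq_mul, smul_zero]; ring
  have htest : ∑ σ, (if f (applyDel z σ) = y then 1 else 0) * c σ =
      smoothedProb f y ψt z - r * smoothedProb f y ψ z := by
    simp only [smoothedProb, score, mul_sum, ← sum_sub_distrib]
    exact sum_congr rfl fun σ _ => by ring
  have hnp := sum_le_sum_mul_of_nonpos_of_nonneg (univ.filter (fun σ => H < retained σ))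
    (c := c) (t := fun σ => if f (applyDel z σ) = y then 1 else 0)
    (fun σ hσ => by
      rw [hc]
      exact mul_nonpos_of_nonpos_of_nonneg (sub_nonpos.mpr (hanti (mem_filter.mp hσ).2.le)) (hq σ))
    (fun σ hσ => by
      rw [hc]
      exact mul_nonneg (sub_nonneg.mpr (hanti (by simpa using hσ))) (hq σ))
    (fun σ => by split_ifs <;> norm_num) (fun σ => by split_ifs <;> norm_num)
  linarith

lemma mul_gfloor_div_le {a b v : ℝ} (hb : 0 < b) (hv : 0 < v) : b * gfloor (a / b) v ≤ a := by
  rw [gfloor, ← le_div_iff₀' hb, ← le_div_iff₀' hv]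
  exact Int.floor_le _

/-- lower bound on the smoothed class probability at a perturbed input,
case `ψ < ψ̃`. -/
theorem stmt12 {Ω Y : Type*} [DecidableEq Y] (x xt zs : List Ω)
    (hz : IsLCS zs x xt) (L : ℕ) (hL : L = zs.length)
    (ψ ψt : ℝ) (hψ : ψ ∈ Set.Ioo (0 : ℝ) 1) (hψt : ψt ∈ Set.Ioo (0 : ℝ) 1)
    (hlt : ψ < ψt)
    (f : List Ω → Y) (y : Y)
    (μ W : ℝ) (hμ : μ = smoothedProb f y ψ x)
    (hW : W = μ - 1 + ψ ^ (x.length - L))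
    (H : ℕ)
    (hH : H = sSup {h | h ≤ L ∧ W ≤ ∑ i ∈ Finset.Icc h L, binomPMF L ψ i}) :
    smoothedProb f y ψt xt ≥
      ψt ^ (xt.length - L) / ψ ^ (x.length - L) *
        (∑ i ∈ Finset.Icc (H + 1) L, binomPMF L ψt i +
          binomPMF L ψt H *
            gfloor ((W - ∑ j ∈ Finset.Icc (H + 1) L, binomPMF L ψ j) / binomPMF L ψ H)
              ((L.choose H : ℝ)⁻¹)) := by
  obtain ⟨hψ0, hψ1⟩ := hψ
  obtain ⟨hψt0, hψt1⟩ := hψt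
  subst hL hμ
  have hHL : H ≤ zs.length := hH ▸ csSup_le' fun h hh => hh.1
  set n := zs.length
  set r := likelihoodRatio ψ ψt n H
  set SB := ∑ j ∈ Icc (H + 1) n, binomPMF n ψ j
  set SBt := ∑ i ∈ Icc (H + 1) n, binomPMF n ψt i
  set ρ := ψ ^ (x.length - n)
  set a := smoothedProb f y ψ zs
  have hρ0 : 0 < ρ := by positivity
  have hρ1 : ρ ≤ 1 := pow_le_one₀ hψ0.le hψ1.le
  have hr : 0 ≤ r := likelihoodRatio_nonneg hψ0.le hψ1.le hψt0.le hψt1.le n H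
  have hWa : W ≤ ρ * a := by
    have := smoothedProb_le_of_sublist f y hψ0.le hψ1.le hz.1
    linarith
  have htail : SBt ≤ r * SB := sum_binomPMF_Icc_le hψ0 hψ1 hlt.le hψt1.le n H
  have hfloor : binomPMF n ψt H * gfloor ((W - SB) / binomPMF n ψ H) ((n.choose H : ℝ)⁻¹) ≤
      r * (W - SB) := by
    rw [binomPMF_eq_likelihoodRatio_mul hψ0.ne' hψ1.ne, mul_assoc]
    exact mul_le_mul_of_nonneg_left (mul_gfloor_div_le (binomPMF_pos hψ0 hψ1 hHL)
      (inv_pos.mpr (mod_cast n.choose_pos hHL))) hr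
  have hshrink : SBt + r * (W - SB) ≤ ρ * (SBt + r * (a - SB)) := by
    linarith [mul_le_mul_of_nonneg_left hWa hr, mul_nonneg (sub_nonneg.mpr hρ1)
      (sub_nonneg.mpr htail)]
  rw [ge_iff_le]
  calc _ ≤ ψt ^ (xt.length - n) / ρ * (SBt + r * (W - SB)) := by gcongr
    _ ≤ ψt ^ (xt.length - n) / ρ * (ρ * (SBt + r * (a - SB))) := by gcongr
    _ = ψt ^ (xt.length - n) * (SBt + r * (a - SB)) := by field_simp
    _ ≤ ψt ^ (xt.length - n) * smoothedProb f y ψt zs := by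
      gcongr
      exact neymanPearson_le_smoothedProb f y hψ0 hψ1 hlt.le hψt1.le zs H
    _ ≤ smoothedProb f y ψt xt := pow_mul_smoothedProb_le_of_sublist f y hψt0.le hψt1.le hz.2.1
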